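/- (Entropy inequality for semi-discrete entropy stable schemes.) Let m ≥ 1, let η : ℝ^m → ℝ be differentiable with gradient W := ∇η, let ψ : ℝ^m → ℝ, and let F̃ : ℝ^m × ℝ^m → ℝ^m satisfy ⟨W(b) − W(a), F̃(a,b)⟩ = ψ(b) − ψ(a) for all a,b. Let Δx > 0, let D : ℤ → (m×m real matrices) assign to each interface a positive semidefinite matrix D_{i+1/2}, and let U : ℝ → (ℤ → ℝ^m) be differentiable in t and satisfy U_i′(t) = −(F̂_{i+1/2}(t) − F̂_{i−1/2}(t))/Δx, where F̂_{i+1/2} = F̃(U_i, U_{i+1}) − ½ D_{i+1/2} (W(U_{i+1}) − W(U_i)). Define q̃(a,b) = ⟨(W(a)+W(b))/2, F̃(a,b)⟩ − (ψ(a)+ψ(b))/2 and q̂_{i+1/2} = q̃(U_i, U_{i+1}) − ½⟨(W(U_i)+W(U_{i+1}))/2, D_{i+1/2}(W(U_{i+1}) − W(U_i))⟩. Then for all i and t, writing w_{i+1/2} = W(U_{i+1}) − W(U_i), (d/dt) η(U_i) + (q̂_{i+1/2} − q̂_{i−1/2})/Δx = −(1/(4Δx))(⟨w_{i+1/2}, D_{i+1/2}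 w_{i+1/2}⟩ + ⟨w_{i−1/2}, D_{i−1/2} w_{i−1/2}⟩) ≤ 0; i.e., the scheme is entropy stable. -/

import Mathlib

open Matrix

/-- The continuous linear map `u ↦ w ⬝ᵥ u` on `ℝ^m`, used to express that a function
has gradient `w`. -/
noncomputable def dotCLM {m : ℕ} (w : Fin m → ℝ) : (Fin m → ℝ) →L[ℝ] ℝ :=
  LinearMap.toContinuousLinearMap
    { toFun := fun u => w ⬝ᵥ u
      map_add' := fun x y => by simp [dotProduct, mul_add, Finset.sum_add_distrib]
      map_smul' := fun c x => by
        simp [dotProduct, Finset.mul_sum, mul_comm, mul_left_comm] }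

/-!
Since `W = ∇η`, the chain rule gives `d/dt η(U_i) = −⟨W(U_i), F̂_{i+1/2} − F̂_{i−1/2}⟩ / Δx`.
Entropy conservation of `F̃` means exactly that `⟨W(a), F̃(a,b)⟩ = q̃(a,b) + ψ(a)` and
`⟨W(b), F̃(a,b)⟩ = q̃(a,b) + ψ(b)`, while writing `W(a)` and `W(b)` as `{{W}} ∓ ½[W]` splits the
dissipative part `−½⟨W, D[W]⟩` into the dissipative entropy flux and `±¼⟨[W], D[W]⟩`. So
`⟨W(U_i), F̂_{i+1/2} − F̂_{i−1/2}⟩ = q̂_{i+1/2} − q̂_{i−1/2} + ¼(⟨w₊, D w₊⟩ + ⟨w₋, D w₋⟩)`, and the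
quadratic forms are nonnegative because the `D_{i±1/2}` are positive semidefinite.
-/

lemma dotCLM_apply {m : ℕ} (w u : Fin m → ℝ) : dotCLM w u = w ⬝ᵥ u := rfl

noncomputable section EntropyFlux

-- The paper's `q̃(a,b)`, `F̂(a,b)` and `q̂(a,b)` for the interface between states `a` and `b`.

variable {α n : Type*} [Fintype n] (W : α → n → ℝ) (ψ : α → ℝ) (Ftil : α → α → n → ℝ)

def ecEntropyFlux (a b : α) : ℝ :=
  ((2 : ℝ)⁻¹ • (W a + W b)) ⬝ᵥ Ftil a b - (ψ a + ψ b) / 2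

def esFlux (D : Matrix n n ℝ) (a b : α) : n → ℝ :=
  Ftil a b - (2 : ℝ)⁻¹ • (D *ᵥ (W b - W a))

def esEntropyFlux (D : Matrix n n ℝ) (a b : α) : ℝ :=
  ecEntropyFlux W ψ Ftil a b - (2 : ℝ)⁻¹ * (((2 : ℝ)⁻¹ • (W a + W b)) ⬝ᵥ (D *ᵥ (W b - W a)))

variable {W ψ Ftil}

lemma left_dotProduct_esFlux (D : Matrix n n ℝ) {a b : α}
    (hEC : (W b - W a) ⬝ᵥ Ftil a b = ψ b - ψ a) :
    W a ⬝ᵥ esFlux W Ftil D a b = esEntropyFlux W ψ Ftil D a b + ψ a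
      + (W b - W a) ⬝ᵥ (D *ᵥ (W b - W a)) / 4 := by
  simp only [esFlux, esEntropyFlux, ecEntropyFlux, dotProduct_sub, dotProduct_smul,
    smul_dotProduct, sub_dotProduct, add_dotProduct, smul_eq_mul] at hEC ⊢
  linarith

lemma right_dotProduct_esFlux (D : Matrix n n ℝ) {a b : α}
    (hEC : (W b - W a) ⬝ᵥ Ftil a b = ψ b - ψ a) :
    W b ⬝ᵥ esFlux W Ftil D a b = esEntropyFlux W ψ Ftil D a b + ψ b
      - (W b - W a) ⬝ᵥ (D *ᵥ (W b - W a)) / 4 := by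
  simp only [esFlux, esEntropyFlux, ecEntropyFlux, dotProduct_sub, dotProduct_smul,
    smul_dotProduct, sub_dotProduct, add_dotProduct, smul_eq_mul] at hEC ⊢
  linarith

lemma dotProduct_esFlux_sub_esFlux (Dl Dr : Matrix n n ℝ) {a b c : α}
    (hECl : (W b - W a) ⬝ᵥ Ftil a b = ψ b - ψ a)
    (hECr : (W c - W b) ⬝ᵥ Ftil b c = ψ c - ψ b) :
    W b ⬝ᵥ (esFlux W Ftil Dr b c - esFlux W Ftil Dl a b)
      = esEntropyFlux W ψ Ftil Dr b c - esEntropyFlux W ψ Ftil Dl a b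
        + ((W c - W b) ⬝ᵥ (Dr *ᵥ (W c - W b)) + (W b - W a) ⬝ᵥ (Dl *ᵥ (W b - W a))) / 4 := by
  rw [dotProduct_sub, left_dotProduct_esFlux Dr hECr, right_dotProduct_esFlux Dl hECl]
  ring

end EntropyFlux

lemma Matrix.PosSemidef.dotProduct_mulVec_self_nonneg {n : Type*} [Fintype n] {D : Matrix n n ℝ}
    (hD : D.PosSemidef) (w : n → ℝ) : 0 ≤ w ⬝ᵥ (D *ᵥ w) := by
  simpa using hD.dotProduct_mulVec_nonneg w

theorem stmt18 (m : ℕ)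
    (η : (Fin m → ℝ) → ℝ) (W : (Fin m → ℝ) → Fin m → ℝ) (ψ : (Fin m → ℝ) → ℝ)
    (Ftil : (Fin m → ℝ) → (Fin m → ℝ) → Fin m → ℝ)
    (hgrad : ∀ x, HasFDerivAt η (dotCLM (W x)) x)
    (hEC : ∀ a b, (W b - W a) ⬝ᵥ Ftil a b = ψ b - ψ a)
    (Δx : ℝ) (hΔx : 0 < Δx)
    (D : ℤ → Matrix (Fin m) (Fin m) ℝ) (hD : ∀ i, (D i).PosSemidef)
    (U : ℝ → ℤ → Fin m → ℝ)
    (hscheme : ∀ (i : ℤ) (t : ℝ),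
      HasDerivAt (fun s => U s i)
        (-(Δx⁻¹ •
          ((Ftil (U t i) (U t (i + 1))
              - (2 : ℝ)⁻¹ • (D i *ᵥ (W (U t (i + 1)) - W (U t i))))
            - (Ftil (U t (i - 1)) (U t i)
              - (2 : ℝ)⁻¹ • (D (i - 1) *ᵥ (W (U t i) - W (U t (i - 1)))))))) t) :
    let qtil : (Fin m → ℝ) → (Fin m → ℝ) → ℝ := fun a b =>
      ((2 : ℝ)⁻¹ • (W a + W b)) ⬝ᵥ Ftil a b - (ψ a + ψ b) / 2
    ∀ (i : ℤ) (t : ℝ),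
      let wp : Fin m → ℝ := W (U t (i + 1)) - W (U t i)
      let wm : Fin m → ℝ := W (U t i) - W (U t (i - 1))
      let qhatp : ℝ := qtil (U t i) (U t (i + 1))
        - (2 : ℝ)⁻¹ * (((2 : ℝ)⁻¹ • (W (U t i) + W (U t (i + 1)))) ⬝ᵥ (D i *ᵥ wp))
      let qhatm : ℝ := qtil (U t (i - 1)) (U t i)
        - (2 : ℝ)⁻¹ * (((2 : ℝ)⁻¹ • (W (U t (i - 1)) + W (U t i))) ⬝ᵥ (D (i - 1) *ᵥ wm))
      let Rdiss : ℝ := -(1 / (4 * Δx)) * (wp ⬝ᵥ (D i *ᵥ wp) + wm ⬝ᵥ (D (i - 1) *ᵥ wm))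
      HasDerivAt (fun s => η (U s i)) (Rdiss - (qhatp - qhatm) / Δx) t ∧ Rdiss ≤ 0 := by
  intro qtil i t wp wm qhatp qhatm Rdiss
  have hbalance := dotProduct_esFlux_sub_esFlux (D (i - 1)) (D i)
    (hEC (U t (i - 1)) (U t i)) (hEC (U t i) (U t (i + 1)))
  have hchain := (hgrad (U t i)).comp_hasDerivAt t (hscheme i t)
  rw [dotCLM_apply] at hchain
  refine ⟨hchain.congr_deriv ?_, ?_⟩
  · change W (U t i) ⬝ᵥ -(Δx⁻¹ • (esFlux W Ftil (D i) (U t i) (U t (i + 1))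
      - esFlux W Ftil (D (i - 1)) (U t (i - 1)) (U t i))) = _
    rw [dotProduct_neg, dotProduct_smul, hbalance, smul_eq_mul]
    simp only [Rdiss, qhatp, qhatm, esEntropyFlux, qtil, ecEntropyFlux, wp, wm]
    ring
  · have hdiss := add_nonneg ((hD i).dotProduct_mulVec_self_nonneg wp)
      ((hD (i - 1)).dotProduct_mulVec_self_nonneg wm)
    exact mul_nonpos_of_nonpos_of_nonneg (neg_nonpos.mpr (by positivity)) hdiss
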